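/- The metric g = dx dw + dy dz + y² dw² + Σ_{i=5}^n ε_i du_i² on ℝⁿ is Ricci-flat. -/

import Mathlib

noncomputable section

open scoped BigOperators

/-- Partial derivative of a scalar function on `ℝⁿ` in the `i`-th coordinate direction. -/
def pd {n : ℕ} (i : Fin n) (f : (Fin n → ℝ) → ℝ) (x : Fin n → ℝ) : ℝ :=
  fderiv ℝ f x (Pi.single i 1)

/-- The `m`-th coordinate of a point of `ℝⁿ` (junk value `0` if `m ≥ n`). -/
def co {n : ℕ} (m : ℕ) (x : Fin n → ℝ) : ℝ :=
  if h : m < n then x ⟨m, h⟩ else 0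

/-- Christoffel symbols `Γ^k_{ij} = ½ g^{kl}(∂_i g_{jl} + ∂_j g_{il} − ∂_l g_{ij})`
of a metric given as a matrix-valued function. -/
def christoffel {n : ℕ} (g : (Fin n → ℝ) → Matrix (Fin n) (Fin n) ℝ)
    (k i j : Fin n) (x : Fin n → ℝ) : ℝ :=
  (1/2) * ∑ l, (g x)⁻¹ k l *
    (pd i (fun y => g y j l) x + pd j (fun y => g y i l) x - pd l (fun y => g y i j) x)

/-- Curvature tensor `R^i_{jkl}` of a torsion-free connection with Christoffel symbols `Γ`. -/
def curvature {n : ℕ} (Γ : Fin n → Fin n → Fin n → (Fin n → ℝ) → ℝ)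
    (i j k l : Fin n) (x : Fin n → ℝ) : ℝ :=
  pd k (Γ i l j) x - pd l (Γ i k j) x +
    ∑ s, (Γ i k s x * Γ s l j x - Γ i l s x * Γ s k j x)

/-- Ricci tensor `Ric_{jl} = R^i_{jil}`. -/
def ricci {n : ℕ} (Γ : Fin n → Fin n → Fin n → (Fin n → ℝ) → ℝ)
    (j l : Fin n) (x : Fin n → ℝ) : ℝ :=
  ∑ i, curvature Γ i j i l x

/-- Lie derivative `(L_v g)_{ij} = v^k ∂_k g_{ij} + g_{kj} ∂_i v^k + g_{ik} ∂_j v^k`. -/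
def lieMetric {n : ℕ} (v : Fin n → (Fin n → ℝ) → ℝ)
    (g : (Fin n → ℝ) → Matrix (Fin n) (Fin n) ℝ) (i j : Fin n) (x : Fin n → ℝ) : ℝ :=
  ∑ k, (v k x * pd k (fun y => g y i j) x
        + g x k j * pd i (v k) x + g x i k * pd j (v k) x)

/-- Lie derivative `(L_v Γ)^k_{ij}` of a torsion-free connection along a vector field `v`. -/
def lieConn {n : ℕ} (v : Fin n → (Fin n → ℝ) → ℝ)
    (Γ : Fin n → Fin n → Fin n → (Fin n → ℝ) → ℝ)
    (k i j : Fin n) (x : Fin n → ℝ) : ℝ :=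
  pd i (fun y => pd j (v k) y) x +
    ∑ s, (v s x * pd s (Γ k i j) x + Γ k s j x * pd i (v s) x
          + Γ k i s x * pd j (v s) x - Γ s i j x * pd s (v k) x)

/-- A vector field with smooth components. -/
def SmoothVF {n : ℕ} (v : Fin n → (Fin n → ℝ) → ℝ) : Prop :=
  ∀ k, ContDiff ℝ (⊤ : ℕ∞) (v k)

/-- `v` is a projective vector field of `g`: the Lie derivative of the Levi-Civita
connection along `v` is of the form `δ^k_i φ_j + δ^k_j φ_i` for some 1-form `φ`
(the standard characterization of projective fields). -/
def IsProjectiveField {n : ℕ} (g : (Fin n → ℝ) → Matrix (Fin n) (Fin n) ℝ)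
    (v : Fin n → (Fin n → ℝ) → ℝ) : Prop :=
  ∃ φ : Fin n → (Fin n → ℝ) → ℝ, ∀ k i j x,
    lieConn v (christoffel g) k i j x =
      (if k = i then φ j x else 0) + (if k = j then φ i x else 0)

/-- The set of (smooth) projective vector fields of `g`: the projective algebra `𝔭(g)`. -/
def ProjSet {n : ℕ} (g : (Fin n → ℝ) → Matrix (Fin n) (Fin n) ℝ) :
    Set (Fin n → (Fin n → ℝ) → ℝ) :=
  {v | SmoothVF v ∧ IsProjectiveField g v}

/-- The set of (smooth) Killing fields of `g`: the isometry algebra `I(g)`. -/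
def KillSet {n : ℕ} (g : (Fin n → ℝ) → Matrix (Fin n) (Fin n) ℝ) :
    Set (Fin n → (Fin n → ℝ) → ℝ) :=
  {v | SmoothVF v ∧ ∀ i j x, lieMetric v g i j x = 0}

/-- The set of (smooth) homothety fields of `g` (`L_v g = λ·g`, `λ` constant):
the homothety algebra `H(g)`. -/
def HomSet {n : ℕ} (g : (Fin n → ℝ) → Matrix (Fin n) (Fin n) ℝ) :
    Set (Fin n → (Fin n → ℝ) → ℝ) :=
  {v | SmoothVF v ∧ ∃ c : ℝ, ∀ i j x, lieMetric v g i j x = c * g x i j}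

/-- The split-signature pp-wave metric `g = dx dw + dy dz + y²dw² + Σ_{i≥5} ε_i du_i²`
on ℝⁿ in coordinates `(x,y,z,w,u₅,…,u_n)` indexed `0,1,2,3,4,…,n−1`
(symmetric products: `dx dw = ½(dx⊗dw + dw⊗dx)` etc.). -/
def gSplit (n : ℕ) (ε : Fin n → ℝ) (x : Fin n → ℝ) : Matrix (Fin n) (Fin n) ℝ :=
  fun i j =>
    if ((i : ℕ) = 0 ∧ (j : ℕ) = 3) ∨ ((i : ℕ) = 3 ∧ (j : ℕ) = 0) then 1/2
    else if ((i : ℕ) = 1 ∧ (j : ℕ) = 2) ∨ ((i : ℕ) = 2 ∧ (j : ℕ) = 1) then 1/2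
    else if (i : ℕ) = 3 ∧ (j : ℕ) = 3 then (co 1 x)^2
    else if i = j ∧ 4 ≤ (i : ℕ) then ε i
    else 0

set_option maxHeartbeats 1000000


def Ginv (n : ℕ) (ε : Fin n → ℝ) (x : Fin n → ℝ) : Matrix (Fin n) (Fin n) ℝ :=
  fun i j =>
    if (i : ℕ) = 0 ∧ (j : ℕ) = 0 then -(4 * (co 1 x)^2)
    else if ((i : ℕ) = 0 ∧ (j : ℕ) = 3) ∨ ((i : ℕ) = 3 ∧ (j : ℕ) = 0) then 2
    else if ((i : ℕ) = 1 ∧ (j : ℕ) = 2) ∨ ((i : ℕ) = 2 ∧ (j : ℕ) = 1) then 2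
    else if i = j ∧ 4 ≤ (i : ℕ) then ε i
    else 0

lemma pd_const {n : ℕ} (m : Fin n) (c : ℝ) (x : Fin n → ℝ) :
    pd m (fun _ => c) x = 0 := by
  simp [pd]

lemma co_eq {n : ℕ} (h1 : 1 < n) (x : Fin n → ℝ) : co 1 x = x ⟨1, h1⟩ := dif_pos h1

lemma co1_clm {n : ℕ} (h1 : 1 < n) : (co 1 : (Fin n → ℝ) → ℝ) =
    ⇑(ContinuousLinearMap.proj (R := ℝ) (φ := fun _ : Fin n => ℝ) ⟨1, h1⟩) := by
  funext y; simp [co_eq h1, ContinuousLinearMap.proj]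

lemma pd_co1 {n : ℕ} (h1 : 1 < n) (m : Fin n) (x : Fin n → ℝ) :
    pd m (co 1) x = if (m : ℕ) = 1 then 1 else 0 := by
  rw [pd, co1_clm h1, ContinuousLinearMap.fderiv]
  simp [ContinuousLinearMap.proj, Pi.single_apply, Fin.ext_iff, eq_comm]

lemma pd_mul_co1 {n : ℕ} (h1 : 1 < n) (c : ℝ) (m : Fin n) (x : Fin n → ℝ) :
    pd m (fun y => c * co 1 y) x = if (m : ℕ) = 1 then c else 0 := by
  have : (fun y : Fin n → ℝ => c * co 1 y) = fun y => (c • (ContinuousLinearMap.proj (R := ℝ) (φ := fun _ : Fin n => ℝ) ⟨1, h1⟩)) y := by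
    funext y; simp [co_eq h1, smul_eq_mul]
  rw [pd, this, ContinuousLinearMap.fderiv]
  simp only [ContinuousLinearMap.coe_smul', Pi.smul_apply, ContinuousLinearMap.proj_apply,
    Pi.single_apply, smul_eq_mul, Fin.ext_iff]
  by_cases h : (m : ℕ) = 1 <;> simp [h, eq_comm]

lemma pd_co1_sq {n : ℕ} (h1 : 1 < n) (m : Fin n) (x : Fin n → ℝ) :
    pd m (fun y => (co 1 y)^2) x = if (m : ℕ) = 1 then 2 * co 1 x else 0 := by
  have h0 : HasFDerivAt (co 1 : (Fin n → ℝ) → ℝ)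
      (ContinuousLinearMap.proj (R := ℝ) (φ := fun _ : Fin n => ℝ) ⟨1, h1⟩) x := by
    rw [co1_clm h1]; exact ContinuousLinearMap.hasFDerivAt _
  have hf : HasFDerivAt (fun y => co 1 y * co 1 y) _ x := h0.mul h0
  have hsq : (fun y : Fin n → ℝ => (co 1 y)^2) = fun y => co 1 y * co 1 y := by
    funext y; ring
  rw [pd, hsq, hf.fderiv]
  simp only [ContinuousLinearMap.add_apply, ContinuousLinearMap.coe_smul', Pi.smul_apply,
    ContinuousLinearMap.proj_apply, Pi.single_apply, smul_eq_mul, Fin.ext_iff]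
  by_cases h : (m : ℕ) = 1 <;> simp [h, eq_comm] <;> ring


lemma gmul {n : ℕ} (hn : 4 ≤ n) (ε : Fin n → ℝ)
    (hε : ∀ i : Fin n, 4 ≤ (i : ℕ) → ε i = 1 ∨ ε i = -1) (x : Fin n → ℝ) :
    gSplit n ε x * Ginv n ε x = 1 := by
  have h0 : 0 < n := by omega
  have h1 : 1 < n := by omega
  have h2 : 2 < n := by omega
  have h3 : 3 < n := by omega
  ext i j
  rw [Matrix.mul_apply, Matrix.one_apply]
  by_cases hi0 : (i : ℕ) = 0
  · have hg : ∀ l : Fin n, gSplit n ε x i l = if l = (⟨3, h3⟩ : Fin n) then 1/2 else 0 := by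
      intro l; simp only [gSplit]; split_ifs <;> simp_all [Fin.ext_iff] <;> omega
    simp only [hg, ite_mul, zero_mul, Finset.sum_ite_eq', Finset.mem_univ, if_true]
    have hG : Ginv n ε x ⟨3, h3⟩ j = if (j : ℕ) = 0 then 2 else 0 := by
      simp only [Ginv]; split_ifs <;> simp_all [Fin.ext_iff] <;> omega
    rw [hG]; split_ifs <;> simp_all [Fin.ext_iff] <;> omega
  by_cases hi1 : (i : ℕ) = 1
  · have hg : ∀ l : Fin n, gSplit n ε x i l = if l = (⟨2, h2⟩ : Fin n) then 1/2 else 0 := by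
      intro l; simp only [gSplit]; split_ifs <;> simp_all [Fin.ext_iff] <;> omega
    simp only [hg, ite_mul, zero_mul, Finset.sum_ite_eq', Finset.mem_univ, if_true]
    have hG : Ginv n ε x ⟨2, h2⟩ j = if (j : ℕ) = 1 then 2 else 0 := by
      simp only [Ginv]; split_ifs <;> simp_all [Fin.ext_iff] <;> omega
    rw [hG]; split_ifs <;> simp_all [Fin.ext_iff] <;> omega
  by_cases hi2 : (i : ℕ) = 2
  · have hg : ∀ l : Fin n, gSplit n ε x i l = if l = (⟨1, h1⟩ : Fin n) then 1/2 else 0 := by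
      intro l; simp only [gSplit]; split_ifs <;> simp_all [Fin.ext_iff] <;> omega
    simp only [hg, ite_mul, zero_mul, Finset.sum_ite_eq', Finset.mem_univ, if_true]
    have hG : Ginv n ε x ⟨1, h1⟩ j = if (j : ℕ) = 2 then 2 else 0 := by
      simp only [Ginv]; split_ifs <;> simp_all [Fin.ext_iff] <;> omega
    rw [hG]; split_ifs <;> simp_all [Fin.ext_iff] <;> omega
  by_cases hi3 : (i : ℕ) = 3
  · have hg : ∀ l : Fin n, gSplit n ε x i l =
        (if l = (⟨0, h0⟩ : Fin n) then 1/2 else 0) +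
        (if l = (⟨3, h3⟩ : Fin n) then (co 1 x)^2 else 0) := by
      intro l; simp only [gSplit]; split_ifs <;> simp_all [Fin.ext_iff] <;> omega
    simp only [hg, add_mul, ite_mul, zero_mul, Finset.sum_add_distrib,
      Finset.sum_ite_eq', Finset.mem_univ, if_true]
    have hG0 : Ginv n ε x ⟨0, h0⟩ j =
        if (j : ℕ) = 0 then -(4 * (co 1 x)^2) else if (j : ℕ) = 3 then 2 else 0 := by
      simp only [Ginv]; split_ifs <;> simp_all [Fin.ext_iff] <;> omega
    have hG3 : Ginv n ε x ⟨3, h3⟩ j = if (j : ℕ) = 0 then 2 else 0 := by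
      simp only [Ginv]; split_ifs <;> simp_all [Fin.ext_iff] <;> omega
    rw [hG0, hG3]; split_ifs <;> simp_all [Fin.ext_iff] <;> ring_nf <;> omega
  -- now 4 ≤ i
  have hi4 : 4 ≤ (i : ℕ) := by omega
  have hg : ∀ l : Fin n, gSplit n ε x i l = if l = i then ε i else 0 := by
    intro l; simp only [gSplit]
    rw [if_neg (by omega), if_neg (by omega), if_neg (by omega)]
    by_cases h : i = l
    · rw [if_pos ⟨h, hi4⟩]; subst h; rw [if_pos rfl]
    · rw [if_neg (fun hc => h hc.1), if_neg (fun hc => h hc.symm)]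
  simp only [hg, ite_mul, zero_mul, Finset.sum_ite_eq', Finset.mem_univ, if_true]
  have hG : Ginv n ε x i j = if i = j then ε i else 0 := by
    simp only [Ginv]
    rw [if_neg (by omega), if_neg (by omega), if_neg (by omega)]
    by_cases h : i = j
    · rw [if_pos ⟨h, hi4⟩, if_pos h]
    · rw [if_neg (fun hc => h hc.1), if_neg h]
  rw [hG]
  rcases hε i hi4 with h | h <;> split_ifs <;> simp_all

lemma ginv_eq {n : ℕ} (hn : 4 ≤ n) (ε : Fin n → ℝ)
    (hε : ∀ i : Fin n, 4 ≤ (i : ℕ) → ε i = 1 ∨ ε i = -1) (x : Fin n → ℝ) :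
    (gSplit n ε x)⁻¹ = Ginv n ε x :=
  Matrix.inv_eq_right_inv (gmul hn ε hε x)
set_option maxHeartbeats 1000000 in
lemma pd_g_entry {n : ℕ} (hn : 4 ≤ n) (ε : Fin n → ℝ) (m i j : Fin n) (x : Fin n → ℝ) :
    pd m (fun y => gSplit n ε y i j) x =
      if (i : ℕ) = 3 ∧ (j : ℕ) = 3 ∧ (m : ℕ) = 1 then 2 * co 1 x else 0 := by
  have h1 : 1 < n := by omega
  by_cases h33 : (i : ℕ) = 3 ∧ (j : ℕ) = 3
  · have he : (fun y : Fin n → ℝ => gSplit n ε y i j) = fun y => (co 1 y)^2 := by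
      funext y; simp only [gSplit]
      rw [if_neg (by omega), if_neg (by omega), if_pos h33]
    rw [he, pd_co1_sq h1]
    by_cases hm : (m : ℕ) = 1 <;> simp [hm, h33]
  · have he : (fun y : Fin n → ℝ => gSplit n ε y i j) = fun _ => gSplit n ε x i j := by
      funext y; simp only [gSplit, if_neg h33]
    rw [he, pd_const, if_neg (by tauto)]

/-- coefficient of the Christoffel symbols -/
def Cc (n : ℕ) (k i j : Fin n) : ℝ :=
  (if (k : ℕ) = 0 ∧ (((i : ℕ) = 1 ∧ (j : ℕ) = 3) ∨ ((i : ℕ) = 3 ∧ (j : ℕ) = 1)) then 2 else 0)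
  + (if (k : ℕ) = 2 ∧ (i : ℕ) = 3 ∧ (j : ℕ) = 3 then -2 else 0)

set_option maxHeartbeats 1000000 in
lemma christoffel_eq {n : ℕ} (hn : 4 ≤ n) (ε : Fin n → ℝ)
    (hε : ∀ i : Fin n, 4 ≤ (i : ℕ) → ε i = 1 ∨ ε i = -1) (k i j : Fin n) (x : Fin n → ℝ) :
    christoffel (gSplit n ε) k i j x = Cc n k i j * co 1 x := by
  have h1 : 1 < n := by omega
  have h3 : 3 < n := by omega
  rw [christoffel, ginv_eq hn ε hε x]
  have hS : ∀ l : Fin n,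
      pd i (fun y => gSplit n ε y j l) x + pd j (fun y => gSplit n ε y i l) x
        - pd l (fun y => gSplit n ε y i j) x =
      (if l = (⟨3, h3⟩ : Fin n) then
          (if (i : ℕ) = 1 ∧ (j : ℕ) = 3 then 2 * co 1 x else 0)
          + (if (i : ℕ) = 3 ∧ (j : ℕ) = 1 then 2 * co 1 x else 0) else 0)
      + (if l = (⟨1, h1⟩ : Fin n) then
          (if (i : ℕ) = 3 ∧ (j : ℕ) = 3 then -(2 * co 1 x) else 0) else 0) := by
    intro l
    rw [pd_g_entry hn, pd_g_entry hn, pd_g_entry hn]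
    simp only [Fin.ext_iff]
    split_ifs <;> first | omega | ring
  simp only [hS, mul_add, mul_ite, mul_zero, Finset.sum_add_distrib,
    Finset.sum_ite_eq', Finset.mem_univ, if_true]
  have hK3 : Ginv n ε x k ⟨3, h3⟩ = if (k : ℕ) = 0 then 2 else 0 := by
    simp only [Ginv]; split_ifs <;> simp_all [Fin.ext_iff] <;> omega
  have hK1 : Ginv n ε x k ⟨1, h1⟩ = if (k : ℕ) = 2 then 2 else 0 := by
    simp only [Ginv]; split_ifs <;> simp_all [Fin.ext_iff] <;> omega
  rw [hK3, hK1]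
  simp only [Cc]
  split_ifs <;> first | omega | ring



lemma Cc_one {n : ℕ} (k a b : Fin n) (h : (k : ℕ) = 1) : Cc n k a b = 0 := by
  simp only [Cc]; split_ifs <;> first | omega | norm_num

lemma Cc_diag {n : ℕ} (a b : Fin n) : Cc n a a b = 0 := by
  simp only [Cc]; split_ifs <;> first | omega | norm_num

lemma Cc_mul {n : ℕ} (a b c d : Fin n) : Cc n a b c * Cc n c a d = 0 := by
  simp only [Cc]; split_ifs <;> first | omega | norm_num


/-- the split-signature metric
`g = dx dw + dy dz + y²dw² + Σ ε_i du_i²` is Ricci-flat. -/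
theorem gSplit_ricci_flat {n : ℕ} (hn : 4 ≤ n) (ε : Fin n → ℝ)
    (hε : ∀ i : Fin n, 4 ≤ (i : ℕ) → ε i = 1 ∨ ε i = -1) :
    ∀ (j l : Fin n) (x : Fin n → ℝ),
      ricci (christoffel (gSplit n ε)) j l x = 0 := by
  intro j l x
  have h1 : 1 < n := by omega
  have hΓ : ∀ k a b, christoffel (gSplit n ε) k a b = fun y => Cc n k a b * co 1 y :=
    fun k a b => funext fun y => christoffel_eq hn ε hε k a b y
  rw [ricci]
  apply Finset.sum_eq_zero
  intro i _
  rw [curvature]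
  simp only [hΓ]
  rw [pd_mul_co1 h1, pd_mul_co1 h1]
  have hterm : ∀ s : Fin n,
      Cc n i i s * co 1 x * (Cc n s l j * co 1 x) - Cc n i l s * co 1 x * (Cc n s i j * co 1 x)
        = 0 := by
    intro s
    have h2 := Cc_diag i s
    have h3 := Cc_mul i l s j
    calc Cc n i i s * co 1 x * (Cc n s l j * co 1 x)
          - Cc n i l s * co 1 x * (Cc n s i j * co 1 x)
        = Cc n i i s * co 1 x * (Cc n s l j * co 1 x)
          - (Cc n i l s * Cc n s i j) * (co 1 x * co 1 x) := by ring
      _ = 0 := by rw [h2, h3]; ring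
  rw [Finset.sum_congr rfl fun s _ => hterm s, Finset.sum_const, smul_zero]
  rw [Cc_diag i j]
  by_cases hI : (i : ℕ) = 1
  · rw [Cc_one i l j hI]; simp
  · simp [hI]
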